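/- arXiv:1906.06192 — 2 statements merged into one kernel-verified Lean document; each statement's English description precedes it below -/
import Mathlib

section
/- (Havel–Hakimi, converse direction) If the non-increasing sequence s : d₁, d₂, …, d_n (n ≥ 2, d₁ ≥ 1) is graphical, then the sequence s₁ : d₂-1, d₃-1, …, d_{d₁+1}-1, d_{d₁+2}, …, d_n is graphical. -/
open scoped Classical

/-- A list of naturals is graphical if it is the multiset of degrees of a simple graph. -/
def Graphical (l : List ℕ) : Prop :=
  ∃ (k : ℕ) (G : SimpleGraph (Fin k)),
    Finset.univ.val.map (fun v => G.degree v) = (l : Multiset ℕ)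

/-!
Realise `d₁ :: t` by a graph and pick a vertex `v` of degree `d₁`. Among all graphs with the
same degrees, take one maximising the total degree of the neighbours of `v`. There the neighbours
of `v` have the largest degrees: if a neighbour `w` had smaller degree than a non-neighbour
`u ≠ v`, some `x` would be adjacent to `u` but not to `w`, and the 2-switch trading the edges
`vw`, `ux` for `vu`, `wx` would keep all degrees and increase that total. As `t` is
non-increasing, the neighbours' degrees are then `t.take d₁` and the others' `t.drop d₁`, so
deleting `v` realises the derived sequence.
-/

open Finset SimpleGraph

theorem Graphical.of_degrees {W : Type*} [Fintype W] (H : SimpleGraph W) [DecidableRel H.Adj]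
    {l : List ℕ} (h : univ.val.map (fun z => H.degree z) = (l : Multiset ℕ)) : Graphical l := by
  let e := Fintype.equivFin W
  refine ⟨_, H.map e, ?_⟩
  rw [← h, ← Multiset.map_univ_val_equiv e, Multiset.map_map]
  refine Multiset.map_congr rfl fun z _ => ?_
  rw [Function.comp_apply, ← Iso.map_apply e H]
  convert (Iso.map e H).degree_eq z

theorem List.coe_take_drop_of_pairwise_ge {α : Type*} [LinearOrder α] {t : List α}
    (ht : t.Pairwise (· ≥ ·)) {A B : Multiset α} (hAB : A + B = t)
    (hBA : ∀ a ∈ A, ∀ b ∈ B, b ≤ a) :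
    (t.take (Multiset.card A) : Multiset α) = A ∧
      (t.drop (Multiset.card A) : Multiset α) = B := by
  have hsorted : (A.sort (· ≥ ·) ++ B.sort (· ≥ ·)).Pairwise (· ≥ ·) :=
    List.pairwise_append.2 ⟨A.pairwise_sort _, B.pairwise_sort _, fun a ha b hb =>
      hBA a ((A.mem_sort _).1 ha) b ((B.mem_sort _).1 hb)⟩
  have hperm : (A.sort (· ≥ ·) ++ B.sort (· ≥ ·)).Perm t := by
    rw [← Multiset.coe_eq_coe, ← Multiset.coe_add, Multiset.sort_eq, Multiset.sort_eq, hAB]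
  have hlen : (A.sort (· ≥ ·)).length = Multiset.card A := Multiset.length_sort _
  rw [← hperm.eq_of_pairwise' hsorted ht, List.take_left' hlen, List.drop_left' hlen]
  exact ⟨A.sort_eq _, B.sort_eq _⟩

namespace SimpleGraph

variable {V : Type*} {G : SimpleGraph V} {v w u x : V}

def twoSwitch (G : SimpleGraph V) (v w u x : V) : SimpleGraph V :=
  G.deleteEdges {s(v, w), s(u, x)} ⊔ edge v u ⊔ edge w x

theorem twoSwitch_swap : G.twoSwitch v w u x = G.twoSwitch w v x u := by
  simp only [twoSwitch, Sym2.eq_swap (a := v), Sym2.eq_swap (a := u), edge_comm v u, edge_comm w x]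
  ac_rfl

theorem twoSwitch_comm : G.twoSwitch v w u x = G.twoSwitch u x v w := by
  simp only [twoSwitch, Set.pair_comm, edge_comm v u, edge_comm w x]

variable [Fintype V]

theorem neighborFinset_twoSwitch_left (hvw : G.Adj v w) (hvu : Gᶜ.Adj v u) (hvx : v ≠ x) :
    (G.twoSwitch v w u x).neighborFinset v = insert u ((G.neighborFinset v).erase w) := by
  rw [compl_adj] at hvu
  ext z
  rw [mem_neighborFinset]
  simp only [twoSwitch, sup_adj, deleteEdges_adj, edge_adj, Set.mem_insert_iff,
    Set.mem_singleton_iff, Sym2.eq_iff, mem_insert, mem_erase, mem_neighborFinset]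
  grind [G.ne_of_adj]

theorem neighborFinset_twoSwitch_of_ne {z : V} (hv : z ≠ v) (hw : z ≠ w) (hu : z ≠ u)
    (hx : z ≠ x) : (G.twoSwitch v w u x).neighborFinset z = G.neighborFinset z := by
  ext y
  rw [mem_neighborFinset]
  simp only [twoSwitch, sup_adj, deleteEdges_adj, edge_adj, Set.mem_insert_iff,
    Set.mem_singleton_iff, Sym2.eq_iff, mem_neighborFinset]
  grind

theorem degree_twoSwitch_left (hvw : G.Adj v w) (hvu : Gᶜ.Adj v u) (hvx : v ≠ x) :
    (G.twoSwitch v w u x).degree v = G.degree v := by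
  have hu : u ∉ (G.neighborFinset v).erase w := by simp [((compl_adj G v u).1 hvu).2]
  have hw : w ∈ G.neighborFinset v := by simpa using hvw
  rw [← card_neighborFinset_eq_degree, neighborFinset_twoSwitch_left hvw hvu hvx,
    card_insert_of_notMem hu, card_erase_add_one hw, card_neighborFinset_eq_degree]

theorem degree_twoSwitch (hvw : G.Adj v w) (hux : G.Adj u x) (hvu : Gᶜ.Adj v u)
    (hwx : Gᶜ.Adj w x) (hvx : v ≠ x) (hwu : w ≠ u) (z : V) :
    (G.twoSwitch v w u x).degree z = G.degree z := by
  by_cases hz : z = v ∨ z = w ∨ z = u ∨ z = x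
  · rcases hz with rfl | rfl | rfl | rfl
    · exact degree_twoSwitch_left hvw hvu hvx
    · rw [twoSwitch_swap]
      exact degree_twoSwitch_left hvw.symm hwx hwu
    · rw [twoSwitch_comm]
      exact degree_twoSwitch_left hux hvu.symm hwu.symm
    · rw [twoSwitch_comm, twoSwitch_swap]
      exact degree_twoSwitch_left hux.symm hwx.symm hvx.symm
  · push Not at hz
    rw [← card_neighborFinset_eq_degree,
      neighborFinset_twoSwitch_of_ne hz.1 hz.2.1 hz.2.2.1 hz.2.2.2, card_neighborFinset_eq_degree]

theorem exists_adj_compl_adj_of_degree_lt (hwv : G.Adj w v) (huv : ¬G.Adj u v)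
    (h : G.degree w < G.degree u) : ∃ x, G.Adj u x ∧ Gᶜ.Adj w x := by
  by_contra! hx
  have hsub : G.neighborFinset u ⊆ insert w ((G.neighborFinset w).erase v) := by
    intro y hy
    have hwy := (compl_adj G w y).not.1 (hx y ((mem_neighborFinset G u y).1 hy))
    simp only [mem_insert, mem_erase, mem_neighborFinset] at hy ⊢
    grind
  have hv : v ∈ G.neighborFinset w := by simpa using hwv
  have := (card_le_card hsub).trans (card_insert_le _ _)
  rw [card_erase_add_one hv, card_neighborFinset_eq_degree, card_neighborFinset_eq_degree] at this
  omega

theorem exists_degree_eq_forall_degree_le_of_adj (G : SimpleGraph V) (v : V) :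
    ∃ H : SimpleGraph V, (∀ z, H.degree z = G.degree z) ∧
      ∀ w u, H.Adj v w → Hᶜ.Adj v u → H.degree u ≤ H.degree w := by
  obtain ⟨H, hH, hmax⟩ :=
    (univ.filter fun H : SimpleGraph V => ∀ z, H.degree z = G.degree z).exists_max_image
      (fun H => ∑ z ∈ H.neighborFinset v, G.degree z) ⟨G, by simp⟩
  rw [mem_filter] at hH
  refine ⟨H, hH.2, fun w u hvw hvu => not_lt.1 fun hlt => ?_⟩
  have hnvu : ¬H.Adj v u := ((compl_adj H v u).1 hvu).2
  obtain ⟨x, hux, hwx⟩ := exists_adj_compl_adj_of_degree_lt hvw.symm (hnvu ∘ Adj.symm) hlt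
  have hvx : v ≠ x := by rintro rfl; exact hnvu hux.symm
  have hwu : w ≠ u := by rintro rfl; exact lt_irrefl _ hlt
  have hle := hmax (H.twoSwitch v w u x)
    (by simp [degree_twoSwitch hvw hux hvu hwx hvx hwu, hH.2])
  have hu : u ∉ (H.neighborFinset v).erase w := by simp [hnvu]
  have hw : w ∈ H.neighborFinset v := by simpa using hvw
  rw [neighborFinset_twoSwitch_left hvw hvu hvx, sum_insert hu, ← add_sum_erase _ _ hw] at hle
  rw [hH.2, hH.2] at hlt
  omega

variable [DecidableEq V]

theorem val_compl_singleton_eq_neighborFinset_add (G : SimpleGraph V) (v : V) :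
    ({v}ᶜ : Finset V).val = (G.neighborFinset v).val + (Gᶜ.neighborFinset v).val := by
  rw [← Finset.disjUnion_val _ _ (Finset.disjoint_left.2 fun z h1 h2 => by simp_all)]
  congr 1
  ext z
  simp only [mem_compl, mem_singleton, mem_disjUnion, mem_neighborFinset, compl_adj]
  grind [G.ne_of_adj]

theorem degree_induce_compl_singleton (G : SimpleGraph V) (v : V) (z : ({v}ᶜ : Set V)) :
    (G.induce {v}ᶜ).degree z = if G.Adj v z then G.degree z - 1 else G.degree z := by
  rw [← card_neighborFinset_eq_degree, ← card_map, map_neighborFinset_induce, Set.toFinset_compl,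
    Set.toFinset_singleton, ← sdiff_eq_inter_compl, sdiff_singleton_eq_erase,
    ← card_neighborFinset_eq_degree]
  split_ifs with h
  · rw [card_erase_of_mem (by simpa using h.symm)]
  · rw [erase_eq_of_notMem (by simpa [adj_comm] using h)]

theorem map_degree_induce_compl_singleton (G : SimpleGraph V) (v : V) :
    univ.val.map (fun z => (G.induce {v}ᶜ).degree z) =
      (G.neighborFinset v).val.map (fun z => G.degree z - 1) +
        (Gᶜ.neighborFinset v).val.map (fun z => G.degree z) := by
  let f : V → ℕ := fun z => if G.Adj v z then G.degree z - 1 else G.degree z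
  have hf : univ.val.map (fun z => (G.induce {v}ᶜ).degree z) = ({v}ᶜ : Finset V).val.map f := by
    rw [Multiset.map_congr rfl fun z _ => degree_induce_compl_singleton G v z]
    have hfilter : univ.filter (· ∈ ({v}ᶜ : Set V)) = {v}ᶜ := by ext; simp
    rw [← hfilter, ← univ_val_map_subtype_restrict]
    rfl
  rw [hf, val_compl_singleton_eq_neighborFinset_add G v, Multiset.map_add]
  congr 1 <;> refine Multiset.map_congr rfl fun z hz => ?_ <;> simp_all [f]

theorem map_univ_val_eq_cons_add {α : Type*} (G : SimpleGraph V) (v : V) (f : V → α) :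
    univ.val.map f =
      f v ::ₘ ((G.neighborFinset v).val.map f + (Gᶜ.neighborFinset v).val.map f) := by
  rw [← insert_compl_self v, insert_val_of_notMem (notMem_compl.2 (mem_singleton_self v)),
    Multiset.map_cons, val_compl_singleton_eq_neighborFinset_add G v, Multiset.map_add]

end SimpleGraph

theorem havel_hakimi_converse_general (d₁ : ℕ) (t : List ℕ)
    (hsorted : (d₁ :: t).Pairwise (· ≥ ·))
    (h : Graphical (d₁ :: t)) :
    Graphical ((t.take d₁).map (· - 1) ++ t.drop d₁) := by
  obtain ⟨k, G, hG⟩ := h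
  obtain ⟨v, -, hv⟩ := Multiset.mem_map.1 (hG ▸ Multiset.mem_coe.2 List.mem_cons_self)
  obtain ⟨H, hdeg, hmax⟩ := G.exists_degree_eq_forall_degree_le_of_adj v
  simp_rw [← hdeg] at hG hv
  rw [H.map_univ_val_eq_cons_add v, hv, ← Multiset.cons_coe, Multiset.cons_inj_right] at hG
  have hcard : Multiset.card ((H.neighborFinset v).val.map fun z => H.degree z) = d₁ := by
    rw [Multiset.card_map, ← hv, ← card_neighborFinset_eq_degree, card_val]
  obtain ⟨htake, hdrop⟩ := hcard ▸ List.coe_take_drop_of_pairwise_ge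
    (List.pairwise_cons.1 hsorted).2 hG (by
      simp only [Multiset.mem_map, mem_val, mem_neighborFinset]
      rintro _ ⟨w, hw, rfl⟩ _ ⟨u, hu, rfl⟩
      exact hmax w u hw hu)
  refine Graphical.of_degrees (H.induce {v}ᶜ) ?_
  rw [map_degree_induce_compl_singleton, ← Multiset.coe_add, ← Multiset.map_coe, htake, hdrop,
    Multiset.map_map]
  rfl

/-- Havel–Hakimi, converse direction: if the non-increasing sequence
`s : d₁, d₂, …, d_n` (`n ≥ 2`, `d₁ ≥ 1`) is graphical, then the derived sequence
`s₁ : d₂-1, …, d_{d₁+1}-1, d_{d₁+2}, …, d_n` is graphical. -/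
theorem havel_hakimi_converse (d₁ : ℕ) (t : List ℕ)
    (hn : (d₁ :: t).length ≥ 2) (hd₁ : 1 ≤ d₁)
    (hsorted : (d₁ :: t).Pairwise (· ≥ ·))
    (h : Graphical (d₁ :: t)) :
    Graphical ((t.take d₁).map (· - 1) ++ t.drop d₁) :=
  havel_hakimi_converse_general d₁ t hsorted h
end

section
/- If a graphical sequence s is realized by some graph, then it is realized by a graph G in which a vertex of maximum degree d₁ is adjacent to vertices having the d₁ next largest degrees d₂, …, d_{d₁+1}. -/
open scoped Classical
open Finset SimpleGraph

private lemma card_insert_erase {α : Type*} [DecidableEq α] {s : Finset α} {x y : α}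
    (hx : x ∈ s) (hy : y ∉ s) :
    (insert y (s.erase x)).card = s.card := by
  have h1 : y ∉ s.erase x := fun h => hy (Finset.mem_of_mem_erase h)
  rw [Finset.card_insert_of_notMem h1, Finset.card_erase_of_mem hx]
  have : 1 ≤ s.card := Finset.card_pos.2 ⟨x, hx⟩
  omega

private lemma switch_exists {n : ℕ} (G : SimpleGraph (Fin n)) (a i j k : Fin n)
    (hai : ¬ G.Adj a i) (haj : G.Adj a j) (hik : G.Adj i k) (hjk : ¬ G.Adj j k)
    (nai : a ≠ i) (naj : a ≠ j) (nak : a ≠ k) (nij : i ≠ j) (nik : i ≠ k) (njk : j ≠ k) :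
    ∃ G' : SimpleGraph (Fin n), (∀ v, G'.degree v = G.degree v) ∧
      (∀ u, G'.Adj a u ↔ (u = i ∨ (u ≠ j ∧ G.Adj a u))) := by
  set R : Fin n → Fin n → Prop := fun u v =>
      ((G.Adj u v ∧ ¬((u = a ∧ v = j) ∨ (u = j ∧ v = a)) ∧ ¬((u = i ∧ v = k) ∨ (u = k ∧ v = i)))
      ∨ (u ≠ v ∧ (((u = a ∧ v = i) ∨ (u = i ∧ v = a)) ∨ ((u = j ∧ v = k) ∨ (u = k ∧ v = j))))) with hR
  have hsymm : Symmetric R := by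
    simp only [hR]
    intro u v h
    rcases h with ⟨h1, h2, h3⟩ | ⟨h1, h2⟩
    · exact Or.inl ⟨h1.symm, fun hc => h2 (by tauto), fun hc => h3 (by tauto)⟩
    · exact Or.inr ⟨h1.symm, by tauto⟩
  have hloop : Irreflexive R := by
    simp only [hR]
    intro u h
    rcases h with ⟨h1, _, _⟩ | ⟨h1, _⟩
    · exact G.loopless.irrefl u h1
    · exact h1 rfl
  set G' : SimpleGraph (Fin n) := ⟨R, ⟨fun _ _ h => hsymm h⟩, ⟨hloop⟩⟩ with hG'
  have hNa : ∀ u, G'.Adj a u ↔ (u = i ∨ (u ≠ j ∧ G.Adj a u)) := by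
    intro u
    show R a u ↔ _
    simp only [hR]
    constructor
    · rintro (⟨h1, h2, h3⟩ | ⟨h1, (⟨_, hu⟩|⟨hu,_⟩) | (⟨hu,_⟩|⟨hu,_⟩)⟩)
      · exact Or.inr ⟨fun hu => h2 (Or.inl ⟨trivial, hu⟩), h1⟩
      · exact Or.inl hu
      · exact absurd hu nai
      · exact absurd hu naj
      · exact absurd hu nak
    · rintro (rfl | ⟨hu, hadj⟩)
      · exact Or.inr ⟨nai, Or.inl (Or.inl ⟨trivial, rfl⟩)⟩
      · refine Or.inl ⟨hadj, ?_, ?_⟩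
        · rintro (⟨_, h⟩ | ⟨h, _⟩); exacts [hu h, naj h]
        · rintro (⟨h, _⟩ | ⟨h, _⟩); exacts [nai h, nak h]
  have hNi : ∀ u, G'.Adj i u ↔ (u = a ∨ (u ≠ k ∧ G.Adj i u)) := by
    intro u
    show R i u ↔ _
    simp only [hR]
    constructor
    · rintro (⟨h1, h2, h3⟩ | ⟨h1, (⟨hu,_⟩|⟨_,hu⟩) | (⟨hu,_⟩|⟨hu,_⟩)⟩)
      · exact Or.inr ⟨fun hu => h3 (Or.inl ⟨trivial, hu⟩), h1⟩
      · exact absurd hu.symm nai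
      · exact Or.inl hu
      · exact absurd hu nij
      · exact absurd hu nik
    · rintro (rfl | ⟨hu, hadj⟩)
      · exact Or.inr ⟨fun h => nai h.symm, Or.inl (Or.inr ⟨trivial, rfl⟩)⟩
      · refine Or.inl ⟨hadj, ?_, ?_⟩
        · rintro (⟨h, _⟩ | ⟨h, _⟩); exacts [nai h.symm, nij h]
        · rintro (⟨_, h⟩ | ⟨h, _⟩); exacts [hu h, nik h]
  have hNj : ∀ u, G'.Adj j u ↔ (u = k ∨ (u ≠ a ∧ G.Adj j u)) := by
    intro u
    show R j u ↔ _
    simp only [hR]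
    constructor
    · rintro (⟨h1, h2, h3⟩ | ⟨h1, (⟨hu,_⟩|⟨hu,_⟩) | (⟨_,hu⟩|⟨hu,_⟩)⟩)
      · exact Or.inr ⟨fun hu => h2 (Or.inr ⟨trivial, hu⟩), h1⟩
      · exact absurd hu.symm naj
      · exact absurd hu.symm nij
      · exact Or.inl hu
      · exact absurd hu njk
    · rintro (rfl | ⟨hu, hadj⟩)
      · exact Or.inr ⟨njk, Or.inr (Or.inl ⟨trivial, rfl⟩)⟩
      · refine Or.inl ⟨hadj, ?_, ?_⟩
        · rintro (⟨h, _⟩ | ⟨_, h⟩); exacts [naj h.symm, hu h]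
        · rintro (⟨h, _⟩ | ⟨h, _⟩); exacts [nij h.symm, njk h]
  have hNk : ∀ u, G'.Adj k u ↔ (u = j ∨ (u ≠ i ∧ G.Adj k u)) := by
    intro u
    show R k u ↔ _
    simp only [hR]
    constructor
    · rintro (⟨h1, h2, h3⟩ | ⟨h1, (⟨hu,_⟩|⟨hu,_⟩) | (⟨hu,_⟩|⟨_,hu⟩)⟩)
      · exact Or.inr ⟨fun hu => h3 (Or.inr ⟨trivial, hu⟩), h1⟩
      · exact absurd hu.symm nak
      · exact absurd hu.symm nik
      · exact absurd hu.symm njk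
      · exact Or.inl hu
    · rintro (rfl | ⟨hu, hadj⟩)
      · exact Or.inr ⟨fun h => njk h.symm, Or.inr (Or.inr ⟨trivial, rfl⟩)⟩
      · refine Or.inl ⟨hadj, ?_, ?_⟩
        · rintro (⟨h, _⟩ | ⟨h, _⟩); exacts [nak h.symm, njk h.symm]
        · rintro (⟨h, _⟩ | ⟨_, h⟩); exacts [nik h.symm, hu h]
  have hNv : ∀ v, v ≠ a → v ≠ i → v ≠ j → v ≠ k → ∀ u, (G'.Adj v u ↔ G.Adj v u) := by
    intro v hva hvi hvj hvk u
    show R v u ↔ _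
    simp only [hR]
    constructor
    · rintro (⟨h1, _, _⟩ | ⟨_, (⟨hu,_⟩|⟨hu,_⟩) | (⟨hu,_⟩|⟨hu,_⟩)⟩)
      · exact h1
      · exact absurd hu hva
      · exact absurd hu hvi
      · exact absurd hu hvj
      · exact absurd hu hvk
    · intro hadj
      refine Or.inl ⟨hadj, ?_, ?_⟩
      · rintro (⟨h, _⟩ | ⟨h, _⟩); exacts [hva h, hvj h]
      · rintro (⟨h, _⟩ | ⟨h, _⟩); exacts [hvi h, hvk h]
  refine ⟨G', ?_, hNa⟩
  have deg_congr : ∀ (H : SimpleGraph (Fin n)) (v : Fin n) (s : Finset (Fin n)),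
      (∀ u, u ∈ s ↔ H.Adj v u) → H.degree v = s.card := by
    intro H v s hs
    have : s = H.neighborFinset v := by
      ext u; rw [hs u, mem_neighborFinset]
    rw [this, card_neighborFinset_eq_degree]
  intro v
  by_cases hva : v = a
  · rw [hva]
    rw [deg_congr G' a (insert i ((G.neighborFinset a).erase j))
        (by intro u; rw [hNa u]; simp only [mem_insert, mem_erase, mem_neighborFinset]),
      deg_congr G a (G.neighborFinset a) (fun u => mem_neighborFinset _ _ _)]
    exact card_insert_erase ((mem_neighborFinset _ _ _).2 haj)
      (fun h => hai ((mem_neighborFinset _ _ _).1 h))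
  by_cases hvi : v = i
  · rw [hvi]
    rw [deg_congr G' i (insert a ((G.neighborFinset i).erase k))
        (by intro u; rw [hNi u]; simp only [mem_insert, mem_erase, mem_neighborFinset]),
      deg_congr G i (G.neighborFinset i) (fun u => mem_neighborFinset _ _ _)]
    exact card_insert_erase ((mem_neighborFinset _ _ _).2 hik)
      (fun h => hai (((mem_neighborFinset _ _ _).1 h).symm))
  by_cases hvj : v = j
  · rw [hvj]
    rw [deg_congr G' j (insert k ((G.neighborFinset j).erase a))
        (by intro u; rw [hNj u]; simp only [mem_insert, mem_erase, mem_neighborFinset]),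
      deg_congr G j (G.neighborFinset j) (fun u => mem_neighborFinset _ _ _)]
    exact card_insert_erase ((mem_neighborFinset _ _ _).2 haj.symm)
      (fun h => hjk ((mem_neighborFinset _ _ _).1 h))
  by_cases hvk : v = k
  · rw [hvk]
    rw [deg_congr G' k (insert j ((G.neighborFinset k).erase i))
        (by intro u; rw [hNk u]; simp only [mem_insert, mem_erase, mem_neighborFinset]),
      deg_congr G k (G.neighborFinset k) (fun u => mem_neighborFinset _ _ _)]
    exact card_insert_erase ((mem_neighborFinset _ _ _).2 hik.symm)
      (fun h => hjk (((mem_neighborFinset _ _ _).1 h).symm))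
  rw [deg_congr G' v (G.neighborFinset v)
      (by intro u; rw [hNv v hva hvi hvj hvk u, mem_neighborFinset]),
    deg_congr G v (G.neighborFinset v) (fun u => mem_neighborFinset _ _ _)]

/-- If a non-increasing graphical sequence `d` is realized by some graph, then it is
realized by a graph in which the vertex of maximum degree `d₁` (vertex `0`) is adjacent
to the vertices having the `d₁` next largest degrees `d₂, …, d_{d₁+1}`. -/
theorem havel_hakimi_key_lemma (n : ℕ) (hn : 2 ≤ n) (d : Fin n → ℕ)
    (hmono : ∀ i j : Fin n, i ≤ j → d j ≤ d i)
    (hd₁ : 1 ≤ d ⟨0, by omega⟩)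
    (hreal : ∃ H : SimpleGraph (Fin n), ∀ v, H.degree v = d v) :
    ∃ G : SimpleGraph (Fin n), (∀ v, G.degree v = d v) ∧
      ∀ i : Fin n, 1 ≤ i.val → i.val ≤ d ⟨0, by omega⟩ → G.Adj ⟨0, by omega⟩ i := by
  classical
  obtain ⟨H, hH⟩ := hreal
  have hn0 : 0 < n := by omega
  set a : Fin n := ⟨0, hn0⟩ with ha
  have hda : 1 ≤ d a := hd₁
  set w : Fin n → ℕ := fun v => n * d v + (n - v.val) with hw
  set P : SimpleGraph (Fin n) → Prop := fun G => ∀ v, G.degree v = d v with hP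
  set F : SimpleGraph (Fin n) → ℕ := fun G => ∑ v ∈ G.neighborFinset a, w v with hF
  obtain ⟨G, hGmem, hmax⟩ := Finset.exists_max_image (Finset.univ.filter P) F
    ⟨H, Finset.mem_filter.2 ⟨Finset.mem_univ _, hH⟩⟩
  have hGdeg : ∀ v, G.degree v = d v := (Finset.mem_filter.1 hGmem).2
  refine ⟨G, hGdeg, ?_⟩
  intro i hi1 hi2
  by_contra hnadj
  have hnadj' : ¬ G.Adj a i := hnadj
  have hi2' : i.val ≤ d a := hi2
  have hcard_nf : ∀ v, (G.neighborFinset v).card = d v := fun v => by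
    rw [card_neighborFinset_eq_degree]; exact hGdeg v
  have nai : a ≠ i := by
    intro h
    have : (0 : ℕ) = i.val := congrArg Fin.val h
    omega
  -- find a neighbor j of a with large index
  have hex_j : ∃ j, G.Adj a j ∧ d a < j.val := by
    by_contra hc
    push_neg at hc
    have hsub : G.neighborFinset a ⊆
        (Finset.univ.filter (fun v : Fin n => 1 ≤ v.val ∧ v.val ≤ d a)).erase i := by
      intro v hv
      have hadj := (mem_neighborFinset _ _ _).1 hv
      refine Finset.mem_erase.2 ⟨fun h => hnadj' (h ▸ hadj), Finset.mem_filter.2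
        ⟨Finset.mem_univ _, ?_, hc v hadj⟩⟩
      have hva : v ≠ a := fun h => G.loopless.irrefl a (h ▸ hadj)
      have : v.val ≠ 0 := fun h0 => hva (Fin.ext (by simp [ha, h0]))
      omega
    have hcardA : (Finset.univ.filter (fun v : Fin n => 1 ≤ v.val ∧ v.val ≤ d a)).card ≤ d a := by
      have h1 : (Finset.univ.filter (fun v : Fin n => 1 ≤ v.val ∧ v.val ≤ d a)).card
          ≤ (Finset.Icc 1 (d a)).card :=
        Finset.card_le_card_of_injOn (fun v : Fin n => v.val)
          (fun v hv => Finset.mem_Icc.2 (Finset.mem_filter.1 hv).2)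
          (fun x _ y _ h => Fin.ext h)
      rw [Nat.card_Icc] at h1
      omega
    have hiA : i ∈ Finset.univ.filter (fun v : Fin n => 1 ≤ v.val ∧ v.val ≤ d a) :=
      Finset.mem_filter.2 ⟨Finset.mem_univ _, hi1, hi2'⟩
    have h2 := Finset.card_le_card hsub
    rw [Finset.card_erase_of_mem hiA] at h2
    have h3 := hcard_nf a
    omega
  obtain ⟨j, haj, hj⟩ := hex_j
  have hij_lt : i.val < j.val := lt_of_le_of_lt hi2' hj
  have hdj : d j ≤ d i := hmono i j (le_of_lt hij_lt)
  have nij : i ≠ j := fun h => by rw [h] at hij_lt; omega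
  have naj : a ≠ j := G.ne_of_adj haj
  -- find the switching partner k
  have hex_k : ∃ k, G.Adj i k ∧ ¬ G.Adj j k ∧ k ≠ a ∧ k ≠ j := by
    by_contra hc
    push_neg at hc
    have hsub : (G.neighborFinset i).erase j ⊆ ((G.neighborFinset j).erase i).erase a := by
      intro x hx
      obtain ⟨hxj, hxi⟩ := Finset.mem_erase.1 hx
      have hadj : G.Adj i x := (mem_neighborFinset _ _ _).1 hxi
      have hxa : x ≠ a := fun h => hnadj' (by rw [h] at hadj; exact hadj.symm)
      have hadjjx : G.Adj j x := by
        by_contra hno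
        exact hxj (hc x hadj hno hxa)
      exact Finset.mem_erase.2 ⟨hxa, Finset.mem_erase.2
        ⟨(G.ne_of_adj hadj).symm, (mem_neighborFinset _ _ _).2 hadjjx⟩⟩
    have hle := Finset.card_le_card hsub
    have hdi_nf := hcard_nf i
    have hdj_nf := hcard_nf j
    by_cases hAij : G.Adj i j
    · have e1 : ((G.neighborFinset i).erase j).card + 1 = (G.neighborFinset i).card :=
        Finset.card_erase_add_one ((mem_neighborFinset _ _ _).2 hAij)
      have e2 : ((G.neighborFinset j).erase i).card + 1 = (G.neighborFinset j).card :=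
        Finset.card_erase_add_one ((mem_neighborFinset _ _ _).2 hAij.symm)
      have e3 : (((G.neighborFinset j).erase i).erase a).card + 1
          = ((G.neighborFinset j).erase i).card :=
        Finset.card_erase_add_one (Finset.mem_erase.2
          ⟨nai, (mem_neighborFinset _ _ _).2 haj.symm⟩)
      omega
    · have e1 : (G.neighborFinset i).erase j = G.neighborFinset i :=
        Finset.erase_eq_of_notMem (fun h => hAij ((mem_neighborFinset _ _ _).1 h))
      have e2 : (G.neighborFinset j).erase i = G.neighborFinset j :=
        Finset.erase_eq_of_notMem (fun h => hAij (((mem_neighborFinset _ _ _).1 h).symm))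
      have e3 : (((G.neighborFinset j).erase i).erase a).card + 1
          = ((G.neighborFinset j).erase i).card :=
        Finset.card_erase_add_one (Finset.mem_erase.2
          ⟨nai, (mem_neighborFinset _ _ _).2 haj.symm⟩)
      rw [e1] at hle
      rw [e2] at hle e3
      omega
  obtain ⟨k, hik, hjk, hka, hkj⟩ := hex_k
  have nak : a ≠ k := hka.symm
  have nik : i ≠ k := G.ne_of_adj hik
  have njk : j ≠ k := hkj.symm
  obtain ⟨G2, hdeg2, hadj2⟩ := switch_exists G a i j k hnadj' haj hik hjk nai naj nak nij nik njk
  have hmem2 : G2 ∈ Finset.univ.filter P :=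
    Finset.mem_filter.2 ⟨Finset.mem_univ _, fun v => (hdeg2 v).trans (hGdeg v)⟩
  have hle := hmax G2 hmem2
  have hNeq : G2.neighborFinset a = insert i ((G.neighborFinset a).erase j) := by
    ext u
    simp only [mem_neighborFinset, Finset.mem_insert, Finset.mem_erase]
    rw [hadj2 u]
  have hinotmem : i ∉ (G.neighborFinset a).erase j :=
    fun h => hnadj' ((mem_neighborFinset _ _ _).1 (Finset.mem_of_mem_erase h))
  have hjm : j ∈ G.neighborFinset a := (mem_neighborFinset _ _ _).2 haj
  have hsum := Finset.sum_erase_add (G.neighborFinset a) w hjm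
  have hFG2 : F G2 + w j = w i + F G := by
    rw [hF]
    simp only
    rw [hNeq, Finset.sum_insert hinotmem]
    omega
  have hwlt : w j < w i := by
    have hjn : j.val < n := j.isLt
    have hjpos : 1 ≤ j.val := by omega
    rcases Nat.lt_or_ge (d j) (d i) with hlt | hge
    · have hmul : n * d j + n ≤ n * d i := by
        calc n * d j + n = n * (d j + 1) := by ring
          _ ≤ n * d i := Nat.mul_le_mul_left _ (by omega)
      calc w j = n * d j + (n - j.val) := rfl
        _ < n * d j + n := by omega
        _ ≤ n * d i := hmul
        _ ≤ w i := Nat.le_add_right _ _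
    · have heq : d j = d i := le_antisymm hdj hge
      show n * d j + (n - j.val) < n * d i + (n - i.val)
      rw [heq]
      have : n - j.val < n - i.val := by omega
      omega
  omega
end
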